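/- The functions J = (q₁²+p₁²)/2 - (q₂²+p₂²) and H = (1-t)R + t(X + εR²), where R = (q₁²+p₁²)/2 + (q₂²+p₂²) and X = 2q₁p₁q₂ + (q₁²-p₁²)p₂, Poisson commute with respect to the canonical symplectic structure on ℝ⁴ (i.e., {J,H} = 0 for all real t, ε). -/

import Mathlib

/-- The momentum of the `1:(-2)` resonant circle action. -/
noncomputable def Josc (q₁ p₁ q₂ p₂ : ℝ) : ℝ :=
  (q₁ ^ 2 + p₁ ^ 2) / 2 - (q₂ ^ 2 + p₂ ^ 2)

/-- The perturbed oscillator Hamiltonian `H = (1-t)R + t(X + εR²)`. -/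
noncomputable def Hosc (t ε : ℝ) (q₁ p₁ q₂ p₂ : ℝ) : ℝ :=
  (1 - t) * ((q₁ ^ 2 + p₁ ^ 2) / 2 + (q₂ ^ 2 + p₂ ^ 2)) +
    t * ((2 * q₁ * p₁ * q₂ + (q₁ ^ 2 - p₁ ^ 2) * p₂) +
      ε * ((q₁ ^ 2 + p₁ ^ 2) / 2 + (q₂ ^ 2 + p₂ ^ 2)) ^ 2)

/-!
`J` generates the flow rotating the `(q₁, p₁)`-plane at unit speed and the `(q₂, p₂)`-plane at
speed `-2`. Both `R` and `X = Im((q₁ + i p₁)² (q₂ + i p₂))` are invariant under this `1:(-2)`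
resonant rotation, i.e. `{J, R} = {J, X} = 0`. Since `H` is a function of `R` and `X`, the chain
rule gives `{J, H} = (1 - t + 2tεR) {J, R} + t {J, X} = 0`.
-/

noncomputable def Rosc (q₁ p₁ q₂ p₂ : ℝ) : ℝ :=
  (q₁ ^ 2 + p₁ ^ 2) / 2 + (q₂ ^ 2 + p₂ ^ 2)

theorem HasDerivAt.perturbed_oscillator {R X : ℝ → ℝ} {R' X' x : ℝ} (t ε : ℝ)
    (hR : HasDerivAt R R' x) (hX : HasDerivAt X X' x) :
    HasDerivAt (fun y => (1 - t) * R y + t * (X y + ε * R y ^ 2))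
      ((1 - t + 2 * t * ε * R x) * R' + t * X') x :=
  ((hR.const_mul (1 - t)).add ((hX.add ((hR.pow 2).const_mul ε)).const_mul t)).congr_deriv
    (by ring)

section PartialDerivatives

variable (t ε q₁ p₁ q₂ p₂ : ℝ)

theorem deriv_Josc_q₁ : deriv (fun x => Josc x p₁ q₂ p₂) q₁ = q₁ := by simp [Josc]

theorem deriv_Josc_p₁ : deriv (fun x => Josc q₁ x q₂ p₂) p₁ = p₁ := by simp [Josc]

theorem deriv_Josc_q₂ : deriv (fun x => Josc q₁ p₁ x p₂) q₂ = -(2 * q₂) := by simp [Josc]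

theorem deriv_Josc_p₂ : deriv (fun x => Josc q₁ p₁ q₂ x) p₂ = -(2 * p₂) := by simp [Josc]

theorem hasDerivAt_Hosc_q₁ :
    HasDerivAt (fun x => Hosc t ε x p₁ q₂ p₂)
      ((1 - t + 2 * t * ε * Rosc q₁ p₁ q₂ p₂) * q₁ + t * (2 * p₁ * q₂ + 2 * q₁ * p₂)) q₁ := by
  have hR : HasDerivAt (fun x => Rosc x p₁ q₂ p₂) q₁ q₁ :=
    ((((hasDerivAt_pow 2 q₁).add_const _).div_const 2).add_const _).congr_deriv (by ring)
  have hX : HasDerivAt (fun x => 2 * x * p₁ * q₂ + (x ^ 2 - p₁ ^ 2) * p₂)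
      (2 * p₁ * q₂ + 2 * q₁ * p₂) q₁ :=
    (((((hasDerivAt_id q₁).const_mul 2).mul_const p₁).mul_const q₂).add
      (((hasDerivAt_pow 2 q₁).sub_const _).mul_const p₂)).congr_deriv (by simp)
  exact hR.perturbed_oscillator t ε hX

theorem hasDerivAt_Hosc_p₁ :
    HasDerivAt (fun x => Hosc t ε q₁ x q₂ p₂)
      ((1 - t + 2 * t * ε * Rosc q₁ p₁ q₂ p₂) * p₁ + t * (2 * q₁ * q₂ - 2 * p₁ * p₂)) p₁ := by
  have hR : HasDerivAt (fun x => Rosc q₁ x q₂ p₂) p₁ p₁ :=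
    ((((hasDerivAt_pow 2 p₁).const_add _).div_const 2).add_const _).congr_deriv (by ring)
  have hX : HasDerivAt (fun x => 2 * q₁ * x * q₂ + (q₁ ^ 2 - x ^ 2) * p₂)
      (2 * q₁ * q₂ - 2 * p₁ * p₂) p₁ :=
    ((((hasDerivAt_id p₁).const_mul (2 * q₁)).mul_const q₂).add
      (((hasDerivAt_pow 2 p₁).const_sub _).mul_const p₂)).congr_deriv
      (by simp only [Nat.cast_ofNat, Nat.add_one_sub_one, pow_one]; ring)
  exact hR.perturbed_oscillator t ε hX

theorem hasDerivAt_Hosc_q₂ :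
    HasDerivAt (fun x => Hosc t ε q₁ p₁ x p₂)
      ((1 - t + 2 * t * ε * Rosc q₁ p₁ q₂ p₂) * (2 * q₂) + t * (2 * q₁ * p₁)) q₂ := by
  have hR : HasDerivAt (fun x => Rosc q₁ p₁ x p₂) (2 * q₂) q₂ :=
    (((hasDerivAt_pow 2 q₂).add_const _).const_add _).congr_deriv (by ring)
  have hX : HasDerivAt (fun x => 2 * q₁ * p₁ * x + (q₁ ^ 2 - p₁ ^ 2) * p₂) (2 * q₁ * p₁) q₂ :=
    (((hasDerivAt_id q₂).const_mul (2 * q₁ * p₁)).add_const _).congr_deriv (by simp)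
  exact hR.perturbed_oscillator t ε hX

theorem hasDerivAt_Hosc_p₂ :
    HasDerivAt (fun x => Hosc t ε q₁ p₁ q₂ x)
      ((1 - t + 2 * t * ε * Rosc q₁ p₁ q₂ p₂) * (2 * p₂) + t * (q₁ ^ 2 - p₁ ^ 2)) p₂ := by
  have hR : HasDerivAt (fun x => Rosc q₁ p₁ q₂ x) (2 * p₂) p₂ :=
    (((hasDerivAt_pow 2 p₂).const_add _).const_add _).congr_deriv (by ring)
  have hX : HasDerivAt (fun x => 2 * q₁ * p₁ * q₂ + (q₁ ^ 2 - p₁ ^ 2) * x) (q₁ ^ 2 - p₁ ^ 2) p₂ :=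
    (((hasDerivAt_id p₂).const_mul (q₁ ^ 2 - p₁ ^ 2)).const_add _).congr_deriv (by simp)
  exact hR.perturbed_oscillator t ε hX

end PartialDerivatives

/-- `J` and `H = (1-t)R + t(X + εR²)` Poisson commute for the canonical
symplectic structure on `ℝ⁴`. -/
theorem oscillator_poisson_commute (t ε : ℝ) (q₁ p₁ q₂ p₂ : ℝ) :
    deriv (fun x => Josc x p₁ q₂ p₂) q₁ * deriv (fun x => Hosc t ε q₁ x q₂ p₂) p₁
      - deriv (fun x => Josc q₁ x q₂ p₂) p₁ * deriv (fun x => Hosc t ε x p₁ q₂ p₂) q₁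
      + deriv (fun x => Josc q₁ p₁ x p₂) q₂ * deriv (fun x => Hosc t ε q₁ p₁ q₂ x) p₂
      - deriv (fun x => Josc q₁ p₁ q₂ x) p₂ * deriv (fun x => Hosc t ε q₁ p₁ x p₂) q₂
      = 0 := by
  rw [(hasDerivAt_Hosc_q₁ t ε q₁ p₁ q₂ p₂).deriv, (hasDerivAt_Hosc_p₁ t ε q₁ p₁ q₂ p₂).deriv,
    (hasDerivAt_Hosc_q₂ t ε q₁ p₁ q₂ p₂).deriv, (hasDerivAt_Hosc_p₂ t ε q₁ p₁ q₂ p₂).deriv,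
    deriv_Josc_q₁, deriv_Josc_p₁, deriv_Josc_q₂, deriv_Josc_p₂]
  ring
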